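/- Let h(φ) := log 2 − 1 + cos φ − (φ/2)·sin(2φ) − cos(2φ)·log(2 cos(φ/2)). Then h(φ) > 0 for all real φ with 0 < φ < π. -/

import Mathlib

/-!
With `u = cos φ`, `s = sin φ`, the quadratic `x² + 2ux + 1 = (x + u)² + s²` has the primitive
`arctan ((x + u) / s) / s` for its reciprocal, and one finds
`h(φ) = ∫₀¹ (x² / (1 + x) - x² (u + x) / (x² + 2ux + 1)) dx`:
the arctangent terms at `x = 1` and `x = 0` are `π/2 - φ/2` and `π/2 - φ`, and
`log (2 + 2u) = 2 log (2 cos (φ/2))`. The integrand equals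
`x² (1 - x) (1 - u) / ((1 + x) (x² + 2ux + 1))`, which is positive on `(0, 1)` since `u < 1`.
-/

open Real intervalIntegral

lemma continuousOn_sq_div_one_add : ContinuousOn (fun x : ℝ ↦ x ^ 2 / (1 + x)) (Set.Ioi (-1)) :=
  (continuousOn_pow 2).div (by fun_prop) fun x hx ↦ by linarith [Set.mem_Ioi.mp hx]

lemma uIcc_zero_one_subset_Ioi : Set.uIcc (0 : ℝ) 1 ⊆ Set.Ioi (-1) := by
  rw [Set.uIcc_of_le zero_le_one]
  exact fun x hx ↦ Set.mem_Ioi.mpr (by linarith [hx.1])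

lemma integral_sq_div_one_add : ∫ x in (0 : ℝ)..1, x ^ 2 / (1 + x) = log 2 - 1 / 2 := by
  have hderiv : ∀ x ∈ Set.uIcc (0 : ℝ) 1,
      HasDerivAt (fun y ↦ y ^ 2 / 2 - y + log (1 + y)) (x ^ 2 / (1 + x)) x := by
    intro x hx
    have hx : 1 + x ≠ 0 := by linarith [Set.mem_Ioi.mp (uIcc_zero_one_subset_Ioi hx)]
    refine ((((hasDerivAt_pow 2 x).div_const 2).sub (hasDerivAt_id' x)).add
      (((hasDerivAt_id' x).const_add 1).log hx)).congr_deriv ?_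
    field_simp
    ring
  rw [integral_eq_sub_of_hasDerivAt hderiv
    (continuousOn_sq_div_one_add.mono uIcc_zero_one_subset_Ioi).intervalIntegrable]
  norm_num
  ring

lemma sq_div_one_add_sub_sq_mul_add_div {u x : ℝ} (hx : 1 + x ≠ 0)
    (hQ : x ^ 2 + 2 * u * x + 1 ≠ 0) :
    x ^ 2 / (1 + x) - x ^ 2 * (u + x) / (x ^ 2 + 2 * u * x + 1)
      = x ^ 2 * (1 - x) * (1 - u) / ((1 + x) * (x ^ 2 + 2 * u * x + 1)) := by
  rw [div_sub_div _ _ hx hQ]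
  ring

section Quadratic

variable {u s : ℝ}

lemma sq_add_two_mul_add_one_pos (hu : u ^ 2 < 1) (x : ℝ) : 0 < x ^ 2 + 2 * u * x + 1 := by
  nlinarith [sq_nonneg (x + u)]

lemma continuous_sq_mul_add_div (hu : u ^ 2 < 1) :
    Continuous fun x : ℝ ↦ x ^ 2 * (u + x) / (x ^ 2 + 2 * u * x + 1) := by
  fun_prop (disch := exact fun x ↦ (sq_add_two_mul_add_one_pos hu x).ne')

lemma hasDerivAt_primitive_sq_mul_add_div (hs : s ≠ 0) (hus : u ^ 2 + s ^ 2 = 1) (x : ℝ) :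
    HasDerivAt (fun y ↦ y ^ 2 / 2 - u * y + (2 * u ^ 2 - 1) / 2 * log (y ^ 2 + 2 * u * y + 1)
      + 2 * u * s * arctan ((y + u) / s))
      (x ^ 2 * (u + x) / (x ^ 2 + 2 * u * x + 1)) x := by
  have hu : u ^ 2 < 1 := by linarith [sq_pos_of_ne_zero hs]
  have hQ := (sq_add_two_mul_add_one_pos hu x).ne'
  have hpoly : HasDerivAt (fun y ↦ y ^ 2 / 2 - u * y) (x - u) x :=
    (((hasDerivAt_pow 2 x).div_const 2).sub ((hasDerivAt_id x).const_mul u)).congr_deriv (by ring)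
  have hquad : HasDerivAt (fun y ↦ y ^ 2 + 2 * u * y + 1) (2 * x + 2 * u) x :=
    (((hasDerivAt_pow 2 x).add ((hasDerivAt_id x).const_mul (2 * u))).add_const 1).congr_deriv
      (by ring)
  have hlin : HasDerivAt (fun y ↦ (y + u) / s) (1 / s) x :=
    ((hasDerivAt_id x).add_const u).div_const s
  refine ((hpoly.add ((hquad.log hQ).const_mul ((2 * u ^ 2 - 1) / 2))).add
    (hlin.arctan.const_mul (2 * u * s))).congr_deriv ?_
  have hsq : 1 + ((x + u) / s) ^ 2 = (x ^ 2 + 2 * u * x + 1) / s ^ 2 := by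
    field_simp
    linear_combination hus
  rw [hsq]
  -- otherwise `field_simp` renormalizes the quadratic and no longer sees that it is nonzero
  generalize hQdef : x ^ 2 + 2 * u * x + 1 = Q at hQ ⊢
  field_simp
  linear_combination (u - x) * hQdef + 2 * u * hus

lemma integral_sq_mul_add_div (hs : s ≠ 0) (hus : u ^ 2 + s ^ 2 = 1) :
    ∫ x in (0 : ℝ)..1, x ^ 2 * (u + x) / (x ^ 2 + 2 * u * x + 1)
      = 1 / 2 - u + (2 * u ^ 2 - 1) / 2 * log (2 + 2 * u)
        + 2 * u * s * (arctan ((1 + u) / s) - arctan (u / s)) := by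
  have hu : u ^ 2 < 1 := by linarith [sq_pos_of_ne_zero hs]
  rw [integral_eq_sub_of_hasDerivAt (fun x _ ↦ hasDerivAt_primitive_sq_mul_add_div hs hus x)
    ((continuous_sq_mul_add_div hu).intervalIntegrable 0 1)]
  norm_num
  ring_nf

lemma integral_sq_mul_add_div_lt (hu : u ^ 2 < 1) :
    ∫ x in (0 : ℝ)..1, x ^ 2 * (u + x) / (x ^ 2 + 2 * u * x + 1)
      < ∫ x in (0 : ℝ)..1, x ^ 2 / (1 + x) := by
  have hint₀ : IntervalIntegrable (fun x : ℝ ↦ x ^ 2 / (1 + x)) MeasureTheory.volume 0 1 :=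
    (continuousOn_sq_div_one_add.mono uIcc_zero_one_subset_Ioi).intervalIntegrable
  have hint := (continuous_sq_mul_add_div hu).intervalIntegrable (μ := MeasureTheory.volume) 0 1
  rw [← sub_pos, ← integral_sub hint₀ hint]
  refine intervalIntegral_pos_of_pos_on (hint₀.sub hint) (fun x ⟨hx₀, hx₁⟩ ↦ ?_) zero_lt_one
  have hQ := sq_add_two_mul_add_one_pos hu x
  have hu₁ : u < 1 := by nlinarith
  rw [sq_div_one_add_sub_sq_mul_add_div (by positivity) hQ.ne']
  have : 0 < 1 - x := by linarith
  have : 0 < 1 - u := by linarith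
  positivity

end Quadratic

lemma arctan_cos_div_sin {θ : ℝ} (h₀ : 0 < θ) (hπ : θ < π) : arctan (cos θ / sin θ) = π / 2 - θ := by
  rw [← inv_div, ← tan_eq_sin_div_cos, ← tan_pi_div_two_sub]
  exact arctan_tan (by linarith) (by linarith)

lemma one_add_cos_div_sin (φ : ℝ) : (1 + cos φ) / sin φ = cos (φ / 2) / sin (φ / 2) := by
  obtain ⟨θ, rfl⟩ : ∃ θ, φ = 2 * θ := ⟨φ / 2, by ring⟩
  rw [mul_div_cancel_left₀ θ two_ne_zero, cos_two_mul, sin_two_mul]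
  by_cases hc : cos θ = 0
  · simp [hc]
  · rw [← mul_div_mul_right (cos θ) (sin θ) (mul_ne_zero two_ne_zero hc)]
    ring_nf

lemma log_two_add_two_cos (φ : ℝ) : log (2 + 2 * cos φ) = 2 * log (2 * cos (φ / 2)) := by
  have hsq : 2 + 2 * cos φ = (2 * cos (φ / 2)) ^ 2 := by
    rw [mul_pow, cos_sq, mul_div_cancel₀ φ two_ne_zero]
    ring
  rw [hsq, log_pow, Nat.cast_ofNat]

/-- `h(φ) > 0` for all `0 < φ < π`, where
`h(φ) = log 2 - 1 + cos φ - (φ/2) sin(2φ) - cos(2φ) log(2 cos(φ/2))`. -/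
theorem stmt_18 (φ : ℝ) (h1 : 0 < φ) (h2 : φ < π) :
    0 < Real.log 2 - 1 + Real.cos φ - (φ / 2) * Real.sin (2 * φ)
      - Real.cos (2 * φ) * Real.log (2 * Real.cos (φ / 2)) := by
  have hs : 0 < sin φ := sin_pos_of_pos_of_lt_pi h1 h2
  have hcos : cos φ ^ 2 < 1 := by nlinarith [sin_sq_add_cos_sq φ]
  have key := integral_sq_mul_add_div_lt hcos
  rw [integral_sq_mul_add_div hs.ne' (cos_sq_add_sin_sq φ), integral_sq_div_one_add,
    arctan_cos_div_sin h1 h2, one_add_cos_div_sin,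
    arctan_cos_div_sin (by linarith) (by linarith), log_two_add_two_cos] at key
  rw [sin_two_mul, cos_two_mul]
  linarith
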